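/- Let V be a finite-dimensional real inner product space of self-adjoint elements in a *-noncommutative probability space (A, φ), with ⟨x, y⟩ = φ(xy), such that every element of V is centered and the family is semicircular (joint free cumulants of order ≠ 2 vanish). Let H be the real Hilbert space V with this inner product, and ψ: V → B(F(H_ℂ)) defined by ψ(x) = G_0(x̂), where x̂ is the image of x in H. Then ψ is moment-preserving: φ(x_1 x_2 ⋯ x_p) = ⟨Ω, ψ(x_1)⋯ψ(x_p) Ω⟩ for all x_1,…,x_p ∈ V. -/

import Mathlib

open scoped Classical

noncomputable section

/-- A partition of `Fin n` given as a finset of blocks. -/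
def IsPartition {n : ℕ} (π : Finset (Finset (Fin n))) : Prop :=
  (∀ B ∈ π, B.Nonempty) ∧ ∀ i : Fin n, ∃! B : Finset (Fin n), B ∈ π ∧ i ∈ B

/-- The crossing condition: `a < b < c < d` with `a, c` in one block and `b, d` in another. -/
def Crossing {n : ℕ} (π : Finset (Finset (Fin n))) : Prop :=
  ∃ B₁ ∈ π, ∃ B₂ ∈ π, B₁ ≠ B₂ ∧ ∃ a ∈ B₁, ∃ b ∈ B₂, ∃ c ∈ B₁, ∃ d ∈ B₂,
    a < b ∧ b < c ∧ c < d

/-- Noncrossing partitions. -/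
def IsNC {n : ℕ} (π : Finset (Finset (Fin n))) : Prop := IsPartition π ∧ ¬ Crossing π

/-- The finset of noncrossing partitions of `{1, …, n}`. -/
def NC (n : ℕ) : Finset (Finset (Finset (Fin n))) := Finset.univ.filter IsNC

/-- The finset of noncrossing pair partitions of `{1, …, n}`. -/
def NCPP (n : ℕ) : Finset (Finset (Finset (Fin n))) :=
  (NC n).filter fun π => ∀ B ∈ π, B.card = 2

/-- `k_π[a₁ ⊗ ⋯ ⊗ aₙ]`: the product over the blocks of `π` of the cumulant functionals
applied to the entries of the block (in increasing order). -/
def cumPart {A : Type*} {n : ℕ} (k : ∀ m : ℕ, (Fin m → A) → ℂ)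
    (π : Finset (Finset (Fin n))) (a : Fin n → A) : ℂ :=
  ∏ B ∈ π, k B.card fun i => a ((B.orderIsoOfFin rfl i : Fin n))

/-- The moment–cumulant relation: `φ(a₁⋯aₙ) = Σ_{π ∈ NC(n)} k_π[a₁ ⊗ ⋯ ⊗ aₙ]`,
defining the free cumulants `k` of `φ`. -/
def MomentCumulant {A : Type*} [Ring A] (φ : A → ℂ) (k : ∀ m : ℕ, (Fin m → A) → ℂ) : Prop :=
  ∀ (n : ℕ), 0 < n → ∀ a : Fin n → A,
    φ (List.ofFn a).prod = ∑ π ∈ NC n, cumPart k π a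

/-- The product over the pairs `(k, l)`, `k < l`, of a pair partition `γ` of `f k l`. -/
def pairProd {n : ℕ} (f : Fin n → Fin n → ℂ) (γ : Finset (Finset (Fin n))) : ℂ :=
  ∏ B ∈ γ, if h : B.Nonempty then f (B.min' h) (B.max' h) else 1

end

section Aux14

open Finset

private lemma blocks_eq {n : ℕ} {π : Finset (Finset (Fin n))} (hπ : IsPartition π)
    {B C : Finset (Fin n)} (hB : B ∈ π) (hC : C ∈ π) {i : Fin n}
    (hiB : i ∈ B) (hiC : i ∈ C) : B = C := by
  obtain ⟨D, -, hD⟩ := hπ.2 i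
  rw [hD B ⟨hB, hiB⟩, hD C ⟨hC, hiC⟩]

private lemma mem_NCPP {n : ℕ} {π : Finset (Finset (Fin n))} :
    π ∈ NCPP n ↔ (IsPartition π ∧ ¬ Crossing π) ∧ ∀ B ∈ π, B.card = 2 := by
  simp [NCPP, NC, IsNC, Finset.mem_filter]

private lemma min'_pair {n : ℕ} {a b : Fin n} (h : a < b) (hne : ({a, b} : Finset (Fin n)).Nonempty) :
    ({a, b} : Finset (Fin n)).min' hne = a := by
  refine le_antisymm (Finset.min'_le _ _ (by simp)) (Finset.le_min' _ _ _ ?_)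
  intro y hy
  rcases Finset.mem_insert.mp hy with rfl | hy
  · exact le_rfl
  · rw [Finset.mem_singleton] at hy; subst hy; exact h.le

private lemma max'_pair {n : ℕ} {a b : Fin n} (h : a < b) (hne : ({a, b} : Finset (Fin n)).Nonempty) :
    ({a, b} : Finset (Fin n)).max' hne = b := by
  refine le_antisymm (Finset.max'_le _ _ _ ?_) (Finset.le_max' _ _ (by simp))
  intro y hy
  rcases Finset.mem_insert.mp hy with rfl | hy
  · exact h.le
  · rw [Finset.mem_singleton] at hy; subst hy; exact le_rfl

section Comb

variable {m : ℕ}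

private def e0 (t : Fin m) : Fin (m + 1) := ⟨t.1 + 1, by have := t.2; omega⟩

private def e1 (t : Fin m) (i : Fin t.1) : Fin (m + 1) :=
  ⟨i.1 + 1, by have := i.2; have := t.2; omega⟩

private def e2 (t : Fin m) (i : Fin (m - 1 - t.1)) : Fin (m + 1) :=
  ⟨t.1 + 2 + i.1, by have := i.2; have := t.2; omega⟩

private lemma e1_inj (t : Fin m) : Function.Injective (e1 t) := by
  intro i j h
  have := congrArg Fin.val h
  simp only [e1] at this
  exact Fin.ext (by omega)

private lemma e2_inj (t : Fin m) : Function.Injective (e2 t) := by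
  intro i j h
  have := congrArg Fin.val h
  simp only [e2] at this
  exact Fin.ext (by omega)

private lemma e1_mono (t : Fin m) : Monotone (e1 t) := by
  intro i j h
  simp only [e1, Fin.mk_le_mk]
  have : i.1 ≤ j.1 := h
  omega

private lemma e2_mono (t : Fin m) : Monotone (e2 t) := by
  intro i j h
  simp only [e2, Fin.mk_le_mk]
  have : i.1 ≤ j.1 := h
  omega

private def comp2 (t : Fin m) (γ₁ : Finset (Finset (Fin t.1)))
    (γ₂ : Finset (Finset (Fin (m - 1 - t.1)))) : Finset (Finset (Fin (m + 1))) :=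
  insert {0, e0 t} ((γ₁.image fun C => C.image (e1 t)) ∪ (γ₂.image fun C => C.image (e2 t)))

private lemma mem_comp2 {t : Fin m} {γ₁ : Finset (Finset (Fin t.1))}
    {γ₂ : Finset (Finset (Fin (m - 1 - t.1)))} {B : Finset (Fin (m + 1))} :
    B ∈ comp2 t γ₁ γ₂ ↔
      B = {0, e0 t} ∨ (∃ C ∈ γ₁, C.image (e1 t) = B) ∨ (∃ C ∈ γ₂, C.image (e2 t) = B) := by
  simp [comp2]

private lemma mem_special {t : Fin m} {x : Fin (m + 1)} :
    x ∈ ({0, e0 t} : Finset (Fin (m + 1))) ↔ x.1 = 0 ∨ x.1 = t.1 + 1 := by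
  rw [Finset.mem_insert, Finset.mem_singleton, Fin.ext_iff, Fin.ext_iff]; exact Iff.rfl

private lemma mem_im1 {t : Fin m} {C : Finset (Fin t.1)} {x : Fin (m + 1)}
    (hx : x ∈ C.image (e1 t)) : 1 ≤ x.1 ∧ x.1 ≤ t.1 := by
  obtain ⟨c, hc, rfl⟩ := Finset.mem_image.mp hx
  have := c.2
  simp only [e1]
  omega

private lemma mem_im2 {t : Fin m} {C : Finset (Fin (m - 1 - t.1))} {x : Fin (m + 1)}
    (hx : x ∈ C.image (e2 t)) : t.1 + 2 ≤ x.1 ∧ x.1 ≤ m := by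
  obtain ⟨c, hc, rfl⟩ := Finset.mem_image.mp hx
  have := c.2
  have := t.2
  simp only [e2]
  omega

end Comb


section Comb2

open Finset

variable {m : ℕ}

private lemma comp2_mem {t : Fin m} {γ₁ : Finset (Finset (Fin t.1))}
    {γ₂ : Finset (Finset (Fin (m - 1 - t.1)))}
    (h1 : γ₁ ∈ NCPP t.1) (h2 : γ₂ ∈ NCPP (m - 1 - t.1)) :
    comp2 t γ₁ γ₂ ∈ NCPP (m + 1) := by
  obtain ⟨⟨hp1, hc1⟩, hcard1⟩ := mem_NCPP.mp h1
  obtain ⟨⟨hp2, hc2⟩, hcard2⟩ := mem_NCPP.mp h2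
  refine mem_NCPP.mpr ⟨⟨⟨?_, ?_⟩, ?_⟩, ?_⟩
  · -- blocks nonempty
    intro B hB
    rcases mem_comp2.mp hB with rfl | ⟨C, hC, rfl⟩ | ⟨C, hC, rfl⟩
    · exact ⟨0, by simp⟩
    · exact (hp1.1 C hC).image _
    · exact (hp2.1 C hC).image _
  · -- exists unique block
    intro x
    by_cases hx0 : x.1 = 0 ∨ x.1 = t.1 + 1
    · refine ⟨{0, e0 t}, ⟨mem_comp2.mpr (Or.inl rfl), mem_special.mpr hx0⟩, ?_⟩
      rintro B ⟨hB, hxB⟩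
      rcases mem_comp2.mp hB with rfl | ⟨C, hC, rfl⟩ | ⟨C, hC, rfl⟩
      · rfl
      · exact absurd (mem_im1 hxB) (by omega)
      · exact absurd (mem_im2 hxB) (by omega)
    · push_neg at hx0
      have hxv : x.1 ≠ 0 ∧ x.1 ≠ t.1 + 1 := hx0
      by_cases hx1 : x.1 ≤ t.1
      · -- low case
        have hxm : x.1 - 1 < t.1 := by omega
        obtain ⟨C, ⟨hC, hiC⟩, hCu⟩ := hp1.2 ⟨x.1 - 1, hxm⟩
        have hxe : e1 t ⟨x.1 - 1, hxm⟩ = x := Fin.ext (by simp [e1]; omega)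
        refine ⟨C.image (e1 t), ⟨mem_comp2.mpr (Or.inr (Or.inl ⟨C, hC, rfl⟩)),
          Finset.mem_image.mpr ⟨_, hiC, hxe⟩⟩, ?_⟩
        rintro B ⟨hB, hxB⟩
        rcases mem_comp2.mp hB with rfl | ⟨D, hD, rfl⟩ | ⟨D, hD, rfl⟩
        · exact absurd (mem_special.mp hxB) (by omega)
        · obtain ⟨d, hd, hdx⟩ := Finset.mem_image.mp hxB
          have hdi : d = ⟨x.1 - 1, hxm⟩ := by
            have h := congrArg Fin.val hdx
            simp only [e1, Fin.val_mk] at h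
            exact Fin.ext (show d.1 = x.1 - 1 by omega)
          rw [hCu D ⟨hD, hdi ▸ hd⟩]
        · exact absurd (mem_im2 hxB) (by omega)
      · -- high case
        have hge : t.1 + 2 ≤ x.1 := by omega
        have hxm : x.1 - t.1 - 2 < m - 1 - t.1 := by have := x.2; omega
        obtain ⟨C, ⟨hC, hiC⟩, hCu⟩ := hp2.2 ⟨x.1 - t.1 - 2, hxm⟩
        have hxe : e2 t ⟨x.1 - t.1 - 2, hxm⟩ = x := Fin.ext (by simp [e2]; omega)
        refine ⟨C.image (e2 t), ⟨mem_comp2.mpr (Or.inr (Or.inr ⟨C, hC, rfl⟩)),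
          Finset.mem_image.mpr ⟨_, hiC, hxe⟩⟩, ?_⟩
        rintro B ⟨hB, hxB⟩
        rcases mem_comp2.mp hB with rfl | ⟨D, hD, rfl⟩ | ⟨D, hD, rfl⟩
        · exact absurd (mem_special.mp hxB) (by omega)
        · exact absurd (mem_im1 hxB) (by omega)
        · obtain ⟨d, hd, hdx⟩ := Finset.mem_image.mp hxB
          have hdi : d = ⟨x.1 - t.1 - 2, hxm⟩ := by
            have h := congrArg Fin.val hdx
            simp only [e2, Fin.val_mk] at h
            exact Fin.ext (show d.1 = x.1 - t.1 - 2 by omega)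
          rw [hCu D ⟨hD, hdi ▸ hd⟩]
  · -- noncrossing
    rintro ⟨B₁, hB₁, B₂, hB₂, hne, a, ha, b, hb, c, hc, d, hd, hab, hbc, hcd⟩
    have hab' : a.1 < b.1 := hab
    have hbc' : b.1 < c.1 := hbc
    have hcd' : c.1 < d.1 := hcd
    rcases mem_comp2.mp hB₁ with rfl | ⟨C₁, hC₁, rfl⟩ | ⟨C₁, hC₁, rfl⟩ <;>
      rcases mem_comp2.mp hB₂ with h₂ | ⟨C₂, hC₂, rfl⟩ | ⟨C₂, hC₂, rfl⟩
    · exact hne h₂.symm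
    · -- special, im1
      have hha := mem_special.mp ha
      have hhc := mem_special.mp hc
      have := mem_im1 hb
      have := mem_im1 hd
      omega
    · -- special, im2
      have hha := mem_special.mp ha
      have hhc := mem_special.mp hc
      have := mem_im2 hb
      have := mem_im2 hd
      omega
    · -- im1, special
      rw [h₂] at hb hd
      have := mem_special.mp hb
      have := mem_special.mp hd
      have := mem_im1 ha
      have := mem_im1 hc
      omega
    · -- im1 im1 : pull back
      obtain ⟨a', ha', rfl⟩ := Finset.mem_image.mp ha
      obtain ⟨b', hb', rfl⟩ := Finset.mem_image.mp hb
      obtain ⟨c', hc', rfl⟩ := Finset.mem_image.mp hc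
      obtain ⟨d', hd', rfl⟩ := Finset.mem_image.mp hd
      refine hc1 ⟨C₁, hC₁, C₂, hC₂, fun h => hne (by rw [h]), a', ha', b', hb', c', hc', d', hd',
        ?_, ?_, ?_⟩ <;>
        · simp only [e1, Fin.lt_def] at hab' hbc' hcd' ⊢
          omega
    · -- im1, im2
      have := mem_im1 ha
      have := mem_im1 hc
      have := mem_im2 hb
      omega
    · -- im2, special
      rw [h₂] at hb
      have := mem_special.mp hb
      have := mem_im2 ha
      have := mem_im2 hc
      omega
    · -- im2, im1
      have := mem_im2 ha
      have := mem_im1 hb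
      omega
    · -- im2 im2
      obtain ⟨a', ha', rfl⟩ := Finset.mem_image.mp ha
      obtain ⟨b', hb', rfl⟩ := Finset.mem_image.mp hb
      obtain ⟨c', hc', rfl⟩ := Finset.mem_image.mp hc
      obtain ⟨d', hd', rfl⟩ := Finset.mem_image.mp hd
      refine hc2 ⟨C₁, hC₁, C₂, hC₂, fun h => hne (by rw [h]), a', ha', b', hb', c', hc', d', hd',
        ?_, ?_, ?_⟩ <;>
        · simp only [e2, Fin.lt_def] at hab' hbc' hcd' ⊢
          omega
  · -- cards
    intro B hB
    rcases mem_comp2.mp hB with rfl | ⟨C, hC, rfl⟩ | ⟨C, hC, rfl⟩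
    · exact Finset.card_pair (by simp [Fin.ext_iff, e0])
    · rw [Finset.card_image_of_injective _ (e1_inj t)]; exact hcard1 C hC
    · rw [Finset.card_image_of_injective _ (e2_inj t)]; exact hcard2 C hC

end Comb2
section Comb3

open Finset

variable {m : ℕ}

private lemma min'_image_mono {a b : ℕ} (f : Fin a → Fin b) (hf : Monotone f)
    (s : Finset (Fin a)) (hs : s.Nonempty) :
    (s.image f).min' (hs.image f) = f (s.min' hs) := by
  refine le_antisymm (Finset.min'_le _ _ (Finset.mem_image_of_mem f (Finset.min'_mem s hs))) ?_
  refine Finset.le_min' _ _ _ fun y hy => ?_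
  obtain ⟨x, hx, rfl⟩ := Finset.mem_image.mp hy
  exact hf (Finset.min'_le s x hx)

private lemma max'_image_mono {a b : ℕ} (f : Fin a → Fin b) (hf : Monotone f)
    (s : Finset (Fin a)) (hs : s.Nonempty) :
    (s.image f).max' (hs.image f) = f (s.max' hs) := by
  refine le_antisymm ?_ (Finset.le_max' _ _ (Finset.mem_image_of_mem f (Finset.max'_mem s hs)))
  refine Finset.max'_le _ _ _ fun y hy => ?_
  obtain ⟨x, hx, rfl⟩ := Finset.mem_image.mp hy
  exact hf (Finset.le_max' s x hx)

private lemma special_not_mem {t : Fin m} {γ₁ : Finset (Finset (Fin t.1))}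
    {γ₂ : Finset (Finset (Fin (m - 1 - t.1)))} :
    ({0, e0 t} : Finset (Fin (m + 1))) ∉
      (γ₁.image fun C => C.image (e1 t)) ∪ (γ₂.image fun C => C.image (e2 t)) := by
  intro h
  have h0 : (0 : Fin (m + 1)) ∈ ({0, e0 t} : Finset (Fin (m + 1))) := by simp
  rcases Finset.mem_union.mp h with h | h <;> obtain ⟨C, hC, hCe⟩ := Finset.mem_image.mp h
  · rw [← hCe] at h0
    have := (mem_im1 h0).1
    simp at this
  · rw [← hCe] at h0
    have := (mem_im2 h0).1
    simp at this

private lemma comp2_pairProd (F : Fin (m + 1) → Fin (m + 1) → ℂ) (t : Fin m)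
    {γ₁ : Finset (Finset (Fin t.1))} {γ₂ : Finset (Finset (Fin (m - 1 - t.1)))}
    (h1 : γ₁ ∈ NCPP t.1) (h2 : γ₂ ∈ NCPP (m - 1 - t.1)) :
    pairProd F (comp2 t γ₁ γ₂)
      = F 0 (e0 t) * (pairProd (fun i j => F (e1 t i) (e1 t j)) γ₁ *
          pairProd (fun i j => F (e2 t i) (e2 t j)) γ₂) := by
  obtain ⟨⟨hp1, -⟩, -⟩ := mem_NCPP.mp h1
  obtain ⟨⟨hp2, -⟩, -⟩ := mem_NCPP.mp h2
  have hdisj : Disjoint (γ₁.image fun C => C.image (e1 t)) (γ₂.image fun C => C.image (e2 t)) := by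
    rw [Finset.disjoint_left]
    rintro B hB1 hB2
    obtain ⟨C, hC, rfl⟩ := Finset.mem_image.mp hB1
    obtain ⟨D, hD, hDe⟩ := Finset.mem_image.mp hB2
    obtain ⟨x, hx⟩ := (hp1.1 C hC).image (e1 t)
    have l1 := mem_im1 hx
    rw [← hDe] at hx
    have l2 := mem_im2 hx
    omega
  have him1 : ∀ C ∈ γ₁, ∀ D ∈ γ₁, C.image (e1 t) = D.image (e1 t) → C = D :=
    fun C _ D _ h => Finset.image_injective (e1_inj t) h
  have him2 : ∀ C ∈ γ₂, ∀ D ∈ γ₂, C.image (e2 t) = D.image (e2 t) → C = D :=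
    fun C _ D _ h => Finset.image_injective (e2_inj t) h
  rw [pairProd]
  unfold comp2
  rw [Finset.prod_insert special_not_mem, Finset.prod_union hdisj,
    Finset.prod_image him1, Finset.prod_image him2]
  have h0lt : (0 : Fin (m + 1)) < e0 t := by
    simp only [Fin.lt_def, e0]
    simp
  have hP1 : (∏ x ∈ γ₁, if h : (Finset.image (e1 t) x).Nonempty then
        F ((Finset.image (e1 t) x).min' h) ((Finset.image (e1 t) x).max' h) else 1)
      = pairProd (fun i j => F (e1 t i) (e1 t j)) γ₁ := by
    rw [pairProd]
    refine Finset.prod_congr rfl fun C hC => ?_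
    have hCne : C.Nonempty := hp1.1 C hC
    rw [dif_pos (hCne.image _), dif_pos hCne,
      min'_image_mono _ (e1_mono t) _ hCne, max'_image_mono _ (e1_mono t) _ hCne]
  have hP2 : (∏ x ∈ γ₂, if h : (Finset.image (e2 t) x).Nonempty then
        F ((Finset.image (e2 t) x).min' h) ((Finset.image (e2 t) x).max' h) else 1)
      = pairProd (fun i j => F (e2 t i) (e2 t j)) γ₂ := by
    rw [pairProd]
    refine Finset.prod_congr rfl fun C hC => ?_
    have hCne : C.Nonempty := hp2.1 C hC
    rw [dif_pos (hCne.image _), dif_pos hCne,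
      min'_image_mono _ (e2_mono t) _ hCne, max'_image_mono _ (e2_mono t) _ hCne]
  have hne0 : ({0, e0 t} : Finset (Fin (m + 1))).Nonempty := ⟨0, by simp⟩
  rw [hP1, hP2, dif_pos hne0, min'_pair h0lt, max'_pair h0lt]

private lemma comp2_inj_t {t t' : Fin m} {γ₁ : Finset (Finset (Fin t.1))}
    {γ₂ : Finset (Finset (Fin (m - 1 - t.1)))} {γ₁' : Finset (Finset (Fin t'.1))}
    {γ₂' : Finset (Finset (Fin (m - 1 - t'.1)))}
    (heq : comp2 t γ₁ γ₂ = comp2 t' γ₁' γ₂') : t = t' := by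
  have h0 : ({0, e0 t} : Finset (Fin (m + 1))) ∈ comp2 t' γ₁' γ₂' :=
    heq ▸ mem_comp2.mpr (Or.inl rfl)
  rcases mem_comp2.mp h0 with h | ⟨C, hC, hCe⟩ | ⟨C, hC, hCe⟩
  · have he : e0 t ∈ ({0, e0 t'} : Finset (Fin (m + 1))) := h ▸ (by simp)
    have := mem_special.mp he
    simp only [e0, Fin.val_mk] at this
    exact Fin.ext (by omega)
  · have h0m : (0 : Fin (m + 1)) ∈ C.image (e1 t') := by rw [hCe]; simp
    have := (mem_im1 h0m).1
    simp at this
  · have h0m : (0 : Fin (m + 1)) ∈ C.image (e2 t') := by rw [hCe]; simp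
    have := (mem_im2 h0m).1
    simp at this

private lemma comp2_inj_parts {t : Fin m} {γ₁ γ₁' : Finset (Finset (Fin t.1))}
    {γ₂ γ₂' : Finset (Finset (Fin (m - 1 - t.1)))}
    (h1 : γ₁ ∈ NCPP t.1) (h2 : γ₂ ∈ NCPP (m - 1 - t.1))
    (heq : comp2 t γ₁ γ₂ = comp2 t γ₁' γ₂') : γ₁ ⊆ γ₁' ∧ γ₂ ⊆ γ₂' := by
  obtain ⟨⟨hp1, -⟩, -⟩ := mem_NCPP.mp h1
  obtain ⟨⟨hp2, -⟩, -⟩ := mem_NCPP.mp h2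
  constructor
  · intro C hC
    have hCne : C.Nonempty := hp1.1 C hC
    have hmem : C.image (e1 t) ∈ comp2 t γ₁' γ₂' :=
      heq ▸ mem_comp2.mpr (Or.inr (Or.inl ⟨C, hC, rfl⟩))
    rcases mem_comp2.mp hmem with h | ⟨D, hD, hDe⟩ | ⟨D, hD, hDe⟩
    · exfalso
      have h0 : (0 : Fin (m + 1)) ∈ C.image (e1 t) := h ▸ (by simp)
      have := (mem_im1 h0).1
      simp at this
    · rwa [← Finset.image_injective (e1_inj t) hDe]
    · exfalso
      obtain ⟨x, hx⟩ := hCne.image (e1 t)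
      have l1 := mem_im1 hx
      rw [← hDe] at hx
      have l2 := mem_im2 hx
      omega
  · intro C hC
    have hCne : C.Nonempty := hp2.1 C hC
    have hmem : C.image (e2 t) ∈ comp2 t γ₁' γ₂' :=
      heq ▸ mem_comp2.mpr (Or.inr (Or.inr ⟨C, hC, rfl⟩))
    rcases mem_comp2.mp hmem with h | ⟨D, hD, hDe⟩ | ⟨D, hD, hDe⟩
    · exfalso
      have h0 : (0 : Fin (m + 1)) ∈ C.image (e2 t) := h ▸ (by simp)
      have := (mem_im2 h0).1
      simp at this
    · exfalso
      obtain ⟨x, hx⟩ := hCne.image (e2 t)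
      have l2 := mem_im2 hx
      rw [← hDe] at hx
      have l1 := mem_im1 hx
      omega
    · rwa [← Finset.image_injective (e2_inj t) hDe]

end Comb3
section Comb4

open Finset

variable {m : ℕ}

private lemma e0_val (t : Fin m) : (e0 t).1 = t.1 + 1 := rfl
private lemma e1_val (t : Fin m) (i : Fin t.1) : (e1 t i).1 = i.1 + 1 := rfl
private lemma e2_val (t : Fin m) (i : Fin (m - 1 - t.1)) : (e2 t i).1 = t.1 + 2 + i.1 := rfl

private lemma comp2_surj {γ : Finset (Finset (Fin (m + 1)))} (hγ : γ ∈ NCPP (m + 1)) :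
    ∃ t : Fin m, ∃ γ₁ ∈ NCPP t.1, ∃ γ₂ ∈ NCPP (m - 1 - t.1), comp2 t γ₁ γ₂ = γ := by
  obtain ⟨⟨hpart, hnc⟩, hcards⟩ := mem_NCPP.mp hγ
  obtain ⟨B₀, ⟨hB₀, h0B₀⟩, hB₀u⟩ := hpart.2 0
  -- B₀ = {0, s} with 0 < s
  obtain ⟨s, hs0, hB₀s⟩ : ∃ s : Fin (m + 1), 0 < s ∧ B₀ = {0, s} := by
    obtain ⟨x, y, hxy, hBxy⟩ := Finset.card_eq_two.mp (hcards B₀ hB₀)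
    rw [hBxy] at h0B₀
    rcases Finset.mem_insert.mp h0B₀ with h | h
    · exact ⟨y, by
        subst h
        exact Fin.pos_iff_ne_zero.mpr (Ne.symm hxy), by rw [hBxy, ← h]⟩
    · rw [Finset.mem_singleton] at h
      exact ⟨x, by
        subst h
        exact Fin.pos_iff_ne_zero.mpr hxy, by rw [hBxy, ← h, Finset.pair_comm]⟩
  have hs1 : 1 ≤ s.1 := hs0
  have hsm : s.1 ≤ m := by have := s.2; omega
  set t : Fin m := ⟨s.1 - 1, by omega⟩ with ht
  have htv : t.1 = s.1 - 1 := rfl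
  have hse0 : s = e0 t := Fin.ext (by rw [e0_val]; omega)
  -- elements of other blocks avoid 0 and s
  have hnot0s : ∀ B ∈ γ, B ≠ B₀ → ∀ z ∈ B, z ≠ 0 ∧ z ≠ s := by
    intro B hB hBne z hz
    constructor
    · rintro rfl; exact hBne (blocks_eq hpart hB hB₀ hz h0B₀)
    · rintro rfl
      exact hBne (blocks_eq hpart hB hB₀ hz (by rw [hB₀s]; simp))
  -- side dichotomy
  have hside : ∀ B ∈ γ, B ≠ B₀ →
      (∀ z ∈ B, 1 ≤ z.1 ∧ z.1 ≤ t.1) ∨ (∀ z ∈ B, t.1 + 2 ≤ z.1) := by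
    intro B hB hBne
    by_cases hlow : ∀ z ∈ B, z.1 < s.1
    · left
      intro z hz
      have h0 := (hnot0s B hB hBne z hz).1
      have h0' : z.1 ≠ 0 := fun h => h0 (Fin.ext h)
      have := hlow z hz
      omega
    · right
      push_neg at hlow
      obtain ⟨z₂, hz₂, hz₂s⟩ := hlow
      have hz₂ne := (hnot0s B hB hBne z₂ hz₂).2
      have hz₂gt : s.1 < z₂.1 := by
        rcases lt_or_eq_of_le hz₂s with h | h
        · exact h
        · exact absurd (Fin.ext h.symm : z₂ = s) hz₂ne
      intro z hz
      by_contra hzc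
      have hz0 := hnot0s B hB hBne z hz
      have hz0' : z.1 ≠ 0 := fun h => hz0.1 (Fin.ext h)
      have hzs' : z.1 ≠ s.1 := fun h => hz0.2 (Fin.ext h)
      have hzlt : z.1 < s.1 := by omega
      refine hnc ⟨B₀, hB₀, B, hB, fun h => hBne h.symm, 0, h0B₀, z, hz, s, by rw [hB₀s]; simp,
        z₂, hz₂, ?_, ?_, ?_⟩
      · rw [Fin.lt_def]
        have h00 : (0 : Fin (m + 1)).1 = 0 := rfl
        omega
      · exact hzlt
      · exact hz₂gt
  -- low blocks are e1-images, high blocks are e2-images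
  have hlow_im : ∀ B ∈ γ, (∀ z ∈ B, 1 ≤ z.1 ∧ z.1 ≤ t.1) →
      (Finset.univ.filter fun c => e1 t c ∈ B).image (e1 t) = B := by
    intro B hB hlow
    ext z
    simp only [Finset.mem_image, Finset.mem_filter, Finset.mem_univ, true_and]
    constructor
    · rintro ⟨c, hc, rfl⟩; exact hc
    · intro hz
      have hb := hlow z hz
      refine ⟨⟨z.1 - 1, by omega⟩, ?_, ?_⟩
      · have : e1 t ⟨z.1 - 1, by omega⟩ = z := Fin.ext (by rw [e1_val]; simp; omega)
        rwa [this]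
      · exact Fin.ext (by rw [e1_val]; simp; omega)
  have hhigh_im : ∀ B ∈ γ, (∀ z ∈ B, t.1 + 2 ≤ z.1) →
      (Finset.univ.filter fun c => e2 t c ∈ B).image (e2 t) = B := by
    intro B hB hhigh
    ext z
    simp only [Finset.mem_image, Finset.mem_filter, Finset.mem_univ, true_and]
    constructor
    · rintro ⟨c, hc, rfl⟩; exact hc
    · intro hz
      have hb := hhigh z hz
      have hzm : z.1 ≤ m := by have := z.2; omega
      refine ⟨⟨z.1 - t.1 - 2, by have := t.2; omega⟩, ?_, ?_⟩
      · have : e2 t ⟨z.1 - t.1 - 2, by have := t.2; omega⟩ = z := Fin.ext (by rw [e2_val]; simp; omega)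
        rwa [this]
      · exact Fin.ext (by rw [e2_val]; simp; omega)
  set γ₁ : Finset (Finset (Fin t.1)) := Finset.univ.filter (fun C => C.image (e1 t) ∈ γ) with hγ₁
  set γ₂ : Finset (Finset (Fin (m - 1 - t.1))) :=
    Finset.univ.filter (fun C => C.image (e2 t) ∈ γ) with hγ₂
  have hmem₁ : ∀ {C : Finset (Fin t.1)}, C ∈ γ₁ ↔ C.image (e1 t) ∈ γ := by
    intro C; simp [hγ₁]
  have hmem₂ : ∀ {C : Finset (Fin (m - 1 - t.1))}, C ∈ γ₂ ↔ C.image (e2 t) ∈ γ := by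
    intro C; simp [hγ₂]
  -- image blocks are not B₀
  have hne₁ : ∀ {C : Finset (Fin t.1)}, C.image (e1 t) ≠ B₀ := by
    intro C h
    have : s ∈ C.image (e1 t) := by rw [h, hB₀s]; simp
    have h2 := (mem_im1 this).2
    omega
  have hne₂ : ∀ {C : Finset (Fin (m - 1 - t.1))}, C.image (e2 t) ≠ B₀ := by
    intro C h
    have : s ∈ C.image (e2 t) := by rw [h, hB₀s]; simp
    have h2 := (mem_im2 this).1
    omega
  -- γ₁ ∈ NCPP t.1
  have hγ₁mem : γ₁ ∈ NCPP t.1 := by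
    refine mem_NCPP.mpr ⟨⟨⟨?_, ?_⟩, ?_⟩, ?_⟩
    · intro C hC
      have := hpart.1 _ (hmem₁.mp hC)
      rwa [Finset.image_nonempty] at this
    · intro i
      obtain ⟨B, ⟨hB, hxB⟩, hBu⟩ := hpart.2 (e1 t i)
      have hiv := i.2
      have hev := e1_val t i
      have hxval : 1 ≤ (e1 t i).1 ∧ (e1 t i).1 ≤ t.1 := by omega
      have hBne : B ≠ B₀ := by
        rintro rfl
        rw [hB₀s] at hxB
        rcases mem_special.mp (by rwa [hse0] at hxB) with h | h <;> omega
      have hBlow : ∀ z ∈ B, 1 ≤ z.1 ∧ z.1 ≤ t.1 := by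
        rcases hside B hB hBne with h | h
        · exact h
        · exact absurd (h _ hxB) (by omega)
      have hBim := hlow_im B hB hBlow
      refine ⟨Finset.univ.filter fun c => e1 t c ∈ B, ⟨hmem₁.mpr (by rwa [hBim]), ?_⟩, ?_⟩
      · simp only [Finset.mem_filter, Finset.mem_univ, true_and]
        exact hxB
      · rintro C ⟨hC, hiC⟩
        have hCB : C.image (e1 t) = B :=
          hBu _ ⟨hmem₁.mp hC, Finset.mem_image_of_mem _ hiC⟩
        apply Finset.image_injective (e1_inj t)
        rw [hCB, hBim]
    · rintro ⟨C₁, hC₁, C₂, hC₂, hne, a, ha, b, hb, c, hc, d, hd, hab, hbc, hcd⟩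
      refine hnc ⟨C₁.image (e1 t), hmem₁.mp hC₁, C₂.image (e1 t), hmem₁.mp hC₂,
        fun h => hne (Finset.image_injective (e1_inj t) h),
        e1 t a, Finset.mem_image_of_mem _ ha, e1 t b, Finset.mem_image_of_mem _ hb,
        e1 t c, Finset.mem_image_of_mem _ hc, e1 t d, Finset.mem_image_of_mem _ hd,
        ?_, ?_, ?_⟩ <;>
        · simp only [e1, Fin.lt_def] at hab hbc hcd ⊢
          omega
    · intro C hC
      have := hcards _ (hmem₁.mp hC)
      rwa [Finset.card_image_of_injective _ (e1_inj t)] at this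
  -- γ₂ ∈ NCPP (m - 1 - t.1)
  have hγ₂mem : γ₂ ∈ NCPP (m - 1 - t.1) := by
    refine mem_NCPP.mpr ⟨⟨⟨?_, ?_⟩, ?_⟩, ?_⟩
    · intro C hC
      have := hpart.1 _ (hmem₂.mp hC)
      rwa [Finset.image_nonempty] at this
    · intro i
      obtain ⟨B, ⟨hB, hxB⟩, hBu⟩ := hpart.2 (e2 t i)
      have hiv := i.2
      have hev := e2_val t i
      have hxval : t.1 + 2 ≤ (e2 t i).1 := by omega
      have hBne : B ≠ B₀ := by
        rintro rfl
        rw [hB₀s] at hxB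
        rcases mem_special.mp (by rwa [hse0] at hxB) with h | h <;> omega
      have hBhigh : ∀ z ∈ B, t.1 + 2 ≤ z.1 := by
        rcases hside B hB hBne with h | h
        · exact absurd ((h _ hxB).2) (by omega)
        · exact h
      have hBim := hhigh_im B hB hBhigh
      refine ⟨Finset.univ.filter fun c => e2 t c ∈ B, ⟨hmem₂.mpr (by rwa [hBim]), ?_⟩, ?_⟩
      · simp only [Finset.mem_filter, Finset.mem_univ, true_and]
        exact hxB
      · rintro C ⟨hC, hiC⟩
        have hCB : C.image (e2 t) = B :=
          hBu _ ⟨hmem₂.mp hC, Finset.mem_image_of_mem _ hiC⟩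
        apply Finset.image_injective (e2_inj t)
        rw [hCB, hBim]
    · rintro ⟨C₁, hC₁, C₂, hC₂, hne, a, ha, b, hb, c, hc, d, hd, hab, hbc, hcd⟩
      refine hnc ⟨C₁.image (e2 t), hmem₂.mp hC₁, C₂.image (e2 t), hmem₂.mp hC₂,
        fun h => hne (Finset.image_injective (e2_inj t) h),
        e2 t a, Finset.mem_image_of_mem _ ha, e2 t b, Finset.mem_image_of_mem _ hb,
        e2 t c, Finset.mem_image_of_mem _ hc, e2 t d, Finset.mem_image_of_mem _ hd,
        ?_, ?_, ?_⟩ <;>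
        · simp only [e2, Fin.lt_def] at hab hbc hcd ⊢
          omega
    · intro C hC
      have := hcards _ (hmem₂.mp hC)
      rwa [Finset.card_image_of_injective _ (e2_inj t)] at this
  refine ⟨t, γ₁, hγ₁mem, γ₂, hγ₂mem, ?_⟩
  -- comp2 t γ₁ γ₂ = γ
  apply Finset.Subset.antisymm
  · intro B hB
    rcases mem_comp2.mp hB with rfl | ⟨C, hC, rfl⟩ | ⟨C, hC, rfl⟩
    · rw [← hse0, ← hB₀s]; exact hB₀
    · exact hmem₁.mp hC
    · exact hmem₂.mp hC
  · intro B hB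
    by_cases hBB₀ : B = B₀
    · subst hBB₀
      exact mem_comp2.mpr (Or.inl (by rw [hB₀s, hse0]))
    · rcases hside B hB hBB₀ with h | h
      · exact mem_comp2.mpr (Or.inr (Or.inl
          ⟨_, hmem₁.mpr (by rwa [hlow_im B hB h]), hlow_im B hB h⟩))
      · exact mem_comp2.mpr (Or.inr (Or.inr
          ⟨_, hmem₂.mpr (by rwa [hhigh_im B hB h]), hhigh_im B hB h⟩))

end Comb4
section Comb5

open Finset

private noncomputable def G (n : ℕ) (F : Fin n → Fin n → ℂ) : ℂ := ∑ γ ∈ NCPP n, pairProd F γ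

private lemma G_congr {n : ℕ} {F F' : Fin n → Fin n → ℂ} (h : ∀ i j, F i j = F' i j) :
    G n F = G n F' := by
  have : F = F' := funext fun i => funext fun j => h i j
  rw [this]

private lemma G_cast {n n' : ℕ} (h : n = n') (F : Fin n → Fin n → ℂ) :
    G n F = G n' (fun i j => F (Fin.cast h.symm i) (Fin.cast h.symm j)) := by
  subst h
  rfl

private lemma NCPP_zero : NCPP 0 = {∅} := by
  ext π
  rw [mem_NCPP, Finset.mem_singleton]
  constructor
  · rintro ⟨⟨⟨hne, -⟩, -⟩, -⟩
    by_contra h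
    obtain ⟨B, hB⟩ := Finset.nonempty_iff_ne_empty.mpr h
    obtain ⟨x, -⟩ := hne B hB
    exact x.elim0
  · rintro rfl
    refine ⟨⟨⟨by simp, fun i => i.elim0⟩, ?_⟩, by simp⟩
    rintro ⟨B, hB, -⟩
    simp at hB

private lemma G_zero (F : Fin 0 → Fin 0 → ℂ) : G 0 F = 1 := by
  rw [G, NCPP_zero, Finset.sum_singleton, pairProd, Finset.prod_empty]

private lemma NCPP_split (m : ℕ) (F : Fin (m + 1) → Fin (m + 1) → ℂ) :
    G (m + 1) F = ∑ t : Fin m, F 0 (e0 t) *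
        (G t.1 (fun i j => F (e1 t i) (e1 t j)) *
         G (m - 1 - t.1) (fun i j => F (e2 t i) (e2 t j))) := by
  have hrw : ∀ t : Fin m, F 0 (e0 t) *
        (G t.1 (fun i j => F (e1 t i) (e1 t j)) *
         G (m - 1 - t.1) (fun i j => F (e2 t i) (e2 t j)))
      = ∑ x ∈ NCPP t.1 ×ˢ NCPP (m - 1 - t.1),
          F 0 (e0 t) * (pairProd (fun i j => F (e1 t i) (e1 t j)) x.1 *
            pairProd (fun i j => F (e2 t i) (e2 t j)) x.2) := by
    intro t
    rw [G, G, Finset.sum_mul_sum, Finset.mul_sum, Finset.sum_product]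
    refine Finset.sum_congr rfl fun γ₁ _ => ?_
    rw [Finset.mul_sum]
  rw [Finset.sum_congr rfl fun t _ => hrw t, Finset.sum_sigma']
  refine (Finset.sum_bij (fun x _ => comp2 x.1 x.2.1 x.2.2) ?_ ?_ ?_ ?_).symm
  · rintro ⟨t, γ₁, γ₂⟩ hx
    rw [Finset.mem_sigma] at hx
    obtain ⟨-, hx⟩ := hx
    rw [Finset.mem_product] at hx
    exact comp2_mem hx.1 hx.2
  · rintro ⟨t, γ₁, γ₂⟩ hx ⟨t', γ₁', γ₂'⟩ hx' heq
    rw [Finset.mem_sigma, Finset.mem_product] at hx hx'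
    obtain ⟨-, h1, h2⟩ := hx
    obtain ⟨-, h1', h2'⟩ := hx'
    obtain rfl : t = t' := comp2_inj_t heq
    obtain ⟨ha, hb⟩ := comp2_inj_parts h1 h2 heq
    obtain ⟨ha', hb'⟩ := comp2_inj_parts h1' h2' heq.symm
    have : γ₁ = γ₁' := Finset.Subset.antisymm ha ha'
    have : γ₂ = γ₂' := Finset.Subset.antisymm hb hb'
    simp_all
  · intro γ hγ
    obtain ⟨t, γ₁, h1, γ₂, h2, heq⟩ := comp2_surj hγ
    exact ⟨⟨t, γ₁, γ₂⟩, Finset.mem_sigma.mpr ⟨Finset.mem_univ t,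
      Finset.mem_product.mpr ⟨h1, h2⟩⟩, heq⟩
  · rintro ⟨t, γ₁, γ₂⟩ hx
    rw [Finset.mem_sigma, Finset.mem_product] at hx
    exact (comp2_pairProd F t hx.2.1 hx.2.2).symm

end Comb5
section Alg

open Finset

private instance decPart14 {n : ℕ} (π : Finset (Finset (Fin n))) : Decidable (IsPartition π) := by
  unfold IsPartition ExistsUnique
  infer_instance

private instance decCross14 {n : ℕ} (π : Finset (Finset (Fin n))) : Decidable (Crossing π) := by
  unfold Crossing
  infer_instance

private instance decNC14 {n : ℕ} (π : Finset (Finset (Fin n))) : Decidable (IsNC π) := by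
  unfold IsNC
  infer_instance

private lemma mem_NC {n : ℕ} {π : Finset (Finset (Fin n))} : π ∈ NC n ↔ IsNC π := by
  simp [NC, Finset.mem_filter]

private lemma NC_two : NC 2 =
    {({({0, 1} : Finset (Fin 2))} : Finset (Finset (Fin 2))),
     {({0} : Finset (Fin 2)), ({1} : Finset (Fin 2))}} := by
  rw [NC, Finset.filter_congr_decidable]
  decide

variable {A V : Type*} [Ring A] [Algebra ℂ A] [Module ℝ A] [NormedAddCommGroup V] [InnerProductSpace ℝ V]

private noncomputable def ipc (v w : V) : ℂ := ((inner ℝ v w : ℝ) : ℂ)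

private lemma k_congr (k : ∀ m : ℕ, (Fin m → A) → ℂ) {m m' : ℕ} (h : m = m')
    (f : Fin m → A) : k m f = k m' (fun i => f (Fin.cast h.symm i)) := by
  subst h
  rfl

private lemma cum_pair_block (k : ∀ m : ℕ, (Fin m → A) → ℂ) {n : ℕ} (B : Finset (Fin n))
    (h2 : B.card = 2) (hne : B.Nonempty) (a : Fin n → A) :
    (k B.card fun i => a ((B.orderIsoOfFin rfl i : Fin n)))
      = k 2 (fun i : Fin 2 => a (![B.min' hne, B.max' hne] i)) := by
  rw [k_congr k h2]
  congr 1
  funext i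
  congr 1
  have hz : 0 < B.card := by omega
  fin_cases i
  · show ((B.orderIsoOfFin rfl (Fin.cast h2.symm ⟨0, by omega⟩) : Fin n)) = _
    rw [Finset.coe_orderIsoOfFin_apply]
    have h0 : (Fin.cast h2.symm (⟨0, by omega⟩ : Fin 2)) = (⟨0, hz⟩ : Fin B.card) :=
      Fin.ext rfl
    rw [h0]
    simp only [Matrix.cons_val_zero]
    exact Finset.orderEmbOfFin_zero rfl hz
  · show ((B.orderIsoOfFin rfl (Fin.cast h2.symm ⟨1, by omega⟩) : Fin n)) = _
    rw [Finset.coe_orderIsoOfFin_apply]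
    have h1 : (Fin.cast h2.symm (⟨1, by omega⟩ : Fin 2))
        = (⟨B.card - 1, by omega⟩ : Fin B.card) := Fin.ext (by simp; omega)
    rw [h1]
    simp only [Matrix.cons_val_one, Matrix.head_cons]
    exact Finset.orderEmbOfFin_last rfl hz

variable (φ : A →ₗ[ℂ] ℂ) (ι : V →ₗ[ℝ] A) (k : ∀ m : ℕ, (Fin m → A) → ℂ)

private lemma k_one
    (hsemi : ∀ p : ℕ, p ≠ 1 → ∀ v : Fin (p + 1) → V, k (p + 1) (fun i => ι (v i)) = 0)
    (g : Fin 1 → V) : k 1 (fun i => ι (g i)) = 0 :=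
  hsemi 0 (by decide) g

private lemma k_two (hk : MomentCumulant φ k)
    (hip : ∀ v w : V, φ (ι v * ι w) = ((inner ℝ v w : ℝ) : ℂ))
    (hsemi : ∀ p : ℕ, p ≠ 1 → ∀ v : Fin (p + 1) → V, k (p + 1) (fun i => ι (v i)) = 0)
    (g : Fin 2 → V) : k 2 (fun i => ι (g i)) = ipc (g 0) (g 1) := by
  have h := hk 2 (by norm_num) (fun i => ι (g i))
  rw [NC_two, Finset.sum_insert (by decide), Finset.sum_singleton] at h
  have hL : (List.ofFn fun i : Fin 2 => ι (g i)).prod = ι (g 0) * ι (g 1) := by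
    simp [List.ofFn_succ]
  rw [hL, hip] at h
  have hcard : ({0, 1} : Finset (Fin 2)).card = 2 := by decide
  have hne : ({0, 1} : Finset (Fin 2)).Nonempty := ⟨0, by simp⟩
  have hP : cumPart k {({0, 1} : Finset (Fin 2))} (fun i => ι (g i))
      = k 2 (fun i => ι (g i)) := by
    rw [cumPart, Finset.prod_singleton, cum_pair_block k _ hcard hne (fun j => ι (g j))]
    congr 1
    funext i
    have hmin : ({0, 1} : Finset (Fin 2)).min' hne = 0 := min'_pair (by decide) hne
    have hmax : ({0, 1} : Finset (Fin 2)).max' hne = 1 := max'_pair (by decide) hne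
    fin_cases i <;> simp [hmin, hmax]
  have hQ : cumPart k {({0} : Finset (Fin 2)), ({1} : Finset (Fin 2))} (fun i => ι (g i))
      = 0 := by
    rw [cumPart, Finset.prod_insert (by decide), Finset.prod_singleton]
    have hz : (k ({0} : Finset (Fin 2)).card fun i =>
        ι (g ((({0} : Finset (Fin 2)).orderIsoOfFin rfl i : Fin 2)))) = 0 := by
      rw [k_congr k (show ({0} : Finset (Fin 2)).card = 1 by decide)]
      have hfn : (fun i : Fin 1 => ι (g ((({0} : Finset (Fin 2)).orderIsoOfFin rfl
          (Fin.cast (by decide) i) : Fin 2)))) = fun _ : Fin 1 => ι (g 0) := by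
        funext i
        congr 2
        exact Finset.mem_singleton.mp (({0} : Finset (Fin 2)).orderIsoOfFin rfl _).2
      rw [hfn]
      exact k_one ι k hsemi (fun _ => g 0)
    rw [hz, zero_mul]
  rw [hP, hQ, add_zero] at h
  exact h.symm

private lemma phi_side (hk : MomentCumulant φ k)
    (hip : ∀ v w : V, φ (ι v * ι w) = ((inner ℝ v w : ℝ) : ℂ))
    (hsemi : ∀ p : ℕ, p ≠ 1 → ∀ v : Fin (p + 1) → V, k (p + 1) (fun i => ι (v i)) = 0)
    (p : ℕ) (hp : 0 < p) (v : Fin p → V) :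
    φ (List.ofFn fun i => ι (v i)).prod = G p (fun i j => ipc (v i) (v j)) := by
  rw [hk p hp, G]
  have hsub : NCPP p ⊆ NC p := fun x hx =>
    mem_NC.mpr ⟨(mem_NCPP.mp hx).1.1, (mem_NCPP.mp hx).1.2⟩
  have h0 : ∀ π ∈ NC p, π ∉ NCPP p → cumPart k π (fun i => ι (v i)) = 0 := by
    intro π hNC hnot
    have hIsNC : IsNC π := mem_NC.mp hNC
    have hpart : IsPartition π := hIsNC.1
    have hex : ∃ B ∈ π, B.card ≠ 2 := by
      by_contra hc
      push_neg at hc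
      exact hnot (mem_NCPP.mpr ⟨⟨hIsNC.1, hIsNC.2⟩, hc⟩)
    obtain ⟨B, hB, hBc⟩ := hex
    rw [cumPart]
    refine Finset.prod_eq_zero hB ?_
    have hBne : B.Nonempty := hpart.1 B hB
    have hc1 : 1 ≤ B.card := Finset.card_pos.mpr hBne
    have hcc : B.card = (B.card - 1) + 1 := by omega
    rw [k_congr k hcc]
    exact hsemi (B.card - 1) (by omega)
      (fun i => v ((B.orderIsoOfFin rfl (Fin.cast hcc.symm i) : Fin p)))
  rw [← Finset.sum_subset hsub h0]
  refine Finset.sum_congr rfl fun π hπ => ?_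
  obtain ⟨⟨hpart, -⟩, hcards⟩ := mem_NCPP.mp hπ
  rw [cumPart, pairProd]
  refine Finset.prod_congr rfl fun B hB => ?_
  have hne := hpart.1 B hB
  rw [dif_pos hne, cum_pair_block k B (hcards B hB) hne (fun j => ι (v j)),
    k_two φ ι k hk hip hsemi (fun i => v (![B.min' hne, B.max' hne] i))]
  simp

end Alg
section ListAux

open Finset

private lemma getD_drop {α : Type*} : ∀ (L : List α) (j i : ℕ) (d : α),
    (L.drop j).getD i d = L.getD (j + i) d
  | _, 0, _, _ => by simp
  | [], _ + 1, _, _ => by simp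
  | a :: L, j + 1, i, d => by
    have h1 : (a :: L).drop (j + 1) = L.drop j := rfl
    have h2 : j + 1 + i = (j + i) + 1 := by omega
    rw [h1, h2, List.getD_cons_succ]
    exact getD_drop L j i d

private lemma getD_take {α : Type*} (L : List α) {j i : ℕ} (h : i < j) (d : α) :
    (L.take j).getD i d = L.getD i d := by
  simp [List.getD_eq_getElem?_getD, List.getElem?_take_of_lt h]

private lemma tri_sum {M : Type*} [AddCommMonoid M] (N : ℕ) (T : ℕ → ℕ → M) :
    (∑ j ∈ Finset.range N, ∑ i ∈ Finset.range (N - (j + 1)), T j (j + 1 + i))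
      = ∑ t ∈ Finset.range N, ∑ l ∈ Finset.range t, T l t := by
  have h1 : ∀ j ∈ Finset.range N,
      (∑ i ∈ Finset.range (N - (j + 1)), T j (j + 1 + i)) = ∑ t ∈ Finset.Ico (j + 1) N, T j t :=
    fun j _ => (Finset.sum_Ico_eq_sum_range (fun t => T j t) (j + 1) N).symm
  rw [Finset.sum_congr rfl h1]
  refine Finset.sum_comm' ?_
  intro x y
  simp only [Finset.mem_range, Finset.mem_Ico]
  omega

end ListAux

section Op

open Finset

variable {V F : Type*} [NormedAddCommGroup V] [InnerProductSpace ℝ V]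
  [NormedAddCommGroup F] [InnerProductSpace ℂ F] [CompleteSpace F]

private noncomputable def XiL (ψ : V → F →L[ℂ] F) (Ω : F) (L : List V) : F := ((L.map ψ).prod) Ω

private noncomputable def fB (ψ : V → F →L[ℂ] F) (Ω : F) (L : List V) : ℂ := inner ℂ Ω (XiL ψ Ω L)

variable (ψ ann : V → F →L[ℂ] F) (Ω : F)

private lemma XiL_nil : XiL ψ Ω [] = Ω := by
  simp [XiL]

private lemma XiL_cons (w : V) (L : List V) : XiL ψ Ω (w :: L) = ψ w (XiL ψ Ω L) := by
  simp [XiL, List.prod_cons, ContinuousLinearMap.mul_apply]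

private lemma fB_nil (hΩ : ‖Ω‖ = 1) : fB ψ Ω [] = 1 := by
  rw [fB, XiL_nil, @inner_self_eq_norm_sq_to_K ℂ, hΩ]
  norm_num

section rels

variable (hΩ : ‖Ω‖ = 1)
  (hvac : ∀ v, ann v Ω = 0)
  (hrel : ∀ v w : V, (ann v).comp (ContinuousLinearMap.adjoint (ann w))
      = ((inner ℝ v w : ℝ) : ℂ) • (1 : F →L[ℂ] F))
  (hψ : ∀ v, ψ v = ann v + ContinuousLinearMap.adjoint (ann v))

include hrel in
private lemma ann_adj_apply (v w : V) (x : F) :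
    ann v ((ContinuousLinearMap.adjoint (ann w)) x) = ipc v w • x := by
  have := congrArg (fun T : F →L[ℂ] F => T x) (hrel v w)
  simpa [ipc] using this

include hΩ hvac hrel hψ in
private lemma annXi : ∀ (n : ℕ) (L : List V), L.length ≤ n → ∀ u : V,
    ann u (XiL ψ Ω L) = ∑ j ∈ Finset.range L.length,
      ((ipc u (L.getD j 0) * fB ψ Ω (L.take j)) • XiL ψ Ω (L.drop (j + 1))) := by
  intro n
  induction n with
  | zero =>
    intro L hL u
    rw [List.length_eq_zero_iff.mp (Nat.le_zero.mp hL)]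
    simp [XiL_nil, hvac u]
  | succ n IH =>
    intro L hL u
    rcases L with _ | ⟨w, L'⟩
    · simp [XiL_nil, hvac u]
    have hL' : L'.length ≤ n := by
      simp only [List.length_cons] at hL
      omega
    have moment : ∀ (Q : List V), Q.length ≤ n → ∀ w' : V,
        fB ψ Ω (w' :: Q) = ∑ l ∈ Finset.range Q.length,
          ipc w' (Q.getD l 0) * (fB ψ Ω (Q.take l) * fB ψ Ω (Q.drop (l + 1))) := by
      intro Q hQ w'
      rw [fB, XiL_cons, hψ w', ContinuousLinearMap.add_apply, inner_add_right]
      have h2 : (inner ℂ Ω ((ContinuousLinearMap.adjoint (ann w')) (XiL ψ Ω Q)) : ℂ) = 0 := by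
        rw [ContinuousLinearMap.adjoint_inner_right, hvac, inner_zero_left]
      rw [h2, add_zero, IH Q hQ w', inner_sum]
      refine Finset.sum_congr rfl fun l hl => ?_
      rw [inner_smul_right]
      show (ipc w' (Q.getD l 0) * fB ψ Ω (Q.take l)) * fB ψ Ω (Q.drop (l + 1)) = _
      ring
    rw [XiL_cons, hψ w, ContinuousLinearMap.add_apply, map_add,
      ann_adj_apply ann hrel u w, IH L' hL' w, map_sum]
    simp only [map_smul]
    have hdr : ∀ j, ann u (XiL ψ Ω (L'.drop (j + 1)))
        = ∑ i ∈ Finset.range (L'.length - (j + 1)),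
          ((ipc u ((L'.drop (j + 1)).getD i 0) * fB ψ Ω ((L'.drop (j + 1)).take i)) •
            XiL ψ Ω ((L'.drop (j + 1)).drop (i + 1))) := by
      intro j
      have h := IH (L'.drop (j + 1)) (by simp only [List.length_drop]; omega) u
      rwa [List.length_drop] at h
    have hLHS : (∑ j ∈ Finset.range L'.length,
          (ipc w (L'.getD j 0) * fB ψ Ω (L'.take j)) • ann u (XiL ψ Ω (L'.drop (j + 1))))
        = ∑ j ∈ Finset.range L'.length, ∑ i ∈ Finset.range (L'.length - (j + 1)),
            ((ipc w (L'.getD j 0) * fB ψ Ω (L'.take j) *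
              (ipc u (L'.getD (j + 1 + i) 0) * fB ψ Ω ((L'.take (j + 1 + i)).drop (j + 1)))) •
              XiL ψ Ω (L'.drop (j + 1 + i + 1))) := by
      refine Finset.sum_congr rfl fun j hj => ?_
      rw [hdr j, Finset.smul_sum]
      refine Finset.sum_congr rfl fun i hi => ?_
      rw [smul_smul, getD_drop, List.take_drop, List.drop_drop]
      try (congr 2 <;> omega)
    rw [hLHS, tri_sum L'.length (fun l t =>
      (ipc w (L'.getD l 0) * fB ψ Ω (L'.take l) *
        (ipc u (L'.getD t 0) * fB ψ Ω ((L'.take t).drop (l + 1)))) •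
        XiL ψ Ω (L'.drop (t + 1))), List.length_cons, Finset.sum_range_succ']
    congr 1
    · refine Finset.sum_congr rfl fun t ht => ?_
      have htlt : t < L'.length := Finset.mem_range.mp ht
      simp only [List.getD_cons_succ, List.take_succ_cons, List.drop_succ_cons]
      rw [moment (L'.take t) (by rw [List.length_take]; omega) w]
      have hlen : (L'.take t).length = t := by rw [List.length_take]; omega
      rw [hlen, Finset.mul_sum, Finset.sum_smul]
      refine Finset.sum_congr rfl fun l hl => ?_
      have hllt : l < t := Finset.mem_range.mp hl
      rw [getD_take L' hllt, List.take_take, min_eq_left hllt.le]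
      congr 1
      ring
    · simp only [List.getD_cons_zero, List.take_zero, List.drop_succ_cons, List.drop_zero]
      rw [fB_nil ψ Ω hΩ, mul_one]

include hΩ hvac hrel hψ in
private lemma fB_moment (Q : List V) (w' : V) :
    fB ψ Ω (w' :: Q) = ∑ l ∈ Finset.range Q.length,
      ipc w' (Q.getD l 0) * (fB ψ Ω (Q.take l) * fB ψ Ω (Q.drop (l + 1))) := by
  rw [fB, XiL_cons, hψ w', ContinuousLinearMap.add_apply, inner_add_right]
  have h2 : (inner ℂ Ω ((ContinuousLinearMap.adjoint (ann w')) (XiL ψ Ω Q)) : ℂ) = 0 := by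
    rw [ContinuousLinearMap.adjoint_inner_right, hvac, inner_zero_left]
  rw [h2, add_zero, annXi ψ ann Ω hΩ hvac hrel hψ Q.length Q le_rfl w', inner_sum]
  refine Finset.sum_congr rfl fun l hl => ?_
  rw [inner_smul_right]
  show (ipc w' (Q.getD l 0) * fB ψ Ω (Q.take l)) * fB ψ Ω (Q.drop (l + 1)) = _
  ring

include hΩ hvac hrel hψ in
private lemma fB_eq_G : ∀ (n : ℕ) (L : List V), L.length = n →
    fB ψ Ω L = G L.length (fun i j => ipc (L.getD i.1 0) (L.getD j.1 0)) := by
  intro n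
  induction n using Nat.strong_induction_on with
  | _ n IH =>
    intro L hn
    rcases L with _ | ⟨w, L'⟩
    · rw [fB_nil ψ Ω hΩ]
      exact (G_zero _).symm
    subst hn
    rw [fB_moment ψ ann Ω hΩ hvac hrel hψ L' w]
    have hRHS : G (w :: L').length
          (fun i j => ipc ((w :: L').getD i.1 0) ((w :: L').getD j.1 0))
        = ∑ t : Fin L'.length,
            ipc ((w :: L').getD ((0 : Fin (L'.length + 1)).1) 0) ((w :: L').getD ((e0 t).1) 0) *
            (G t.1 (fun i j => ipc ((w :: L').getD ((e1 t i).1) 0) ((w :: L').getD ((e1 t j).1) 0)) *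
             G (L'.length - 1 - t.1)
               (fun i j => ipc ((w :: L').getD ((e2 t i).1) 0) ((w :: L').getD ((e2 t j).1) 0))) :=
      NCPP_split L'.length _
    rw [hRHS, ← Fin.sum_univ_eq_sum_range (fun l => ipc w (L'.getD l 0) *
      (fB ψ Ω (L'.take l) * fB ψ Ω (L'.drop (l + 1)))) L'.length]
    refine Finset.sum_congr rfl fun t _ => ?_
    have htlt : t.1 < L'.length := t.2
    -- head factor
    have hhead : ipc ((w :: L').getD ((0 : Fin (L'.length + 1)).1) 0)
        ((w :: L').getD ((e0 t).1) 0) = ipc w (L'.getD t.1 0) := by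
      have h0 : ((0 : Fin (L'.length + 1)).1) = 0 := rfl
      have he : (e0 t).1 = t.1 + 1 := rfl
      rw [h0, he, List.getD_cons_zero, List.getD_cons_succ]
    -- take factor
    have htake : fB ψ Ω (L'.take t.1)
        = G t.1 (fun i j => ipc ((w :: L').getD ((e1 t i).1) 0)
            ((w :: L').getD ((e1 t j).1) 0)) := by
      have hlen : (L'.take t.1).length = t.1 := by rw [List.length_take]; omega
      rw [IH (L'.take t.1).length (by rw [List.length_take, List.length_cons]; omega) (L'.take t.1) rfl, G_cast hlen]
      refine G_congr fun i j => ?_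
      have hc : ∀ l : Fin t.1, ((Fin.cast hlen.symm l) : Fin (L'.take t.1).length).1 = l.1 :=
        fun l => rfl
      rw [hc i, hc j, getD_take L' i.2, getD_take L' j.2]
      have he : ∀ l : Fin t.1, ((e1 t l).1) = l.1 + 1 := fun l => rfl
      rw [he i, he j, List.getD_cons_succ, List.getD_cons_succ]
    -- drop factor
    have hdrop : fB ψ Ω (L'.drop (t.1 + 1))
        = G (L'.length - 1 - t.1) (fun i j => ipc ((w :: L').getD ((e2 t i).1) 0)
            ((w :: L').getD ((e2 t j).1) 0)) := by
      have hlen : (L'.drop (t.1 + 1)).length = L'.length - 1 - t.1 := by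
        rw [List.length_drop]; omega
      rw [IH (L'.drop (t.1 + 1)).length (by rw [List.length_drop, List.length_cons]; omega)
        (L'.drop (t.1 + 1)) rfl, G_cast hlen]
      refine G_congr fun i j => ?_
      have hc : ∀ l : Fin (L'.length - 1 - t.1),
          ((Fin.cast hlen.symm l) : Fin (L'.drop (t.1 + 1)).length).1 = l.1 := fun l => rfl
      rw [hc i, hc j, getD_drop, getD_drop]
      have he : ∀ l : Fin (L'.length - 1 - t.1), ((e2 t l).1) = t.1 + 2 + l.1 := fun l => rfl
      rw [he i, he j]
      have harr : ∀ l : ℕ, t.1 + 2 + l = (t.1 + 1 + l) + 1 := fun l => by omega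
      rw [harr i.1, harr j.1, List.getD_cons_succ, List.getD_cons_succ]
    rw [hhead, htake, hdrop]

end rels

end Op

private lemma getD_ofFn {α : Type*} {n : ℕ} (v : Fin n → α) (d : α) (i : ℕ) (h : i < n) :
    (List.ofFn v).getD i d = v ⟨i, h⟩ := by
  rw [List.getD_eq_getElem?_getD,
    List.getElem?_eq_getElem (by simpa [List.length_ofFn] using h), Option.getD_some,
    List.getElem_ofFn]

end Aux14

/-- Let `V` be a finite-dimensional real inner product space of centered self-adjoint
elements of a `*`-probability space `(A, φ)` (embedded by `ι`), with `⟨v,w⟩ = φ(ι v · ι w)`,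
forming a semicircular family.  Let `ψ(v) = G₀(v̂) = a(v) + a*(v)` be the free Gaussian
operators on the Fock space over (the complexification of) `V`, presented abstractly by
the relations `a(v)Ω = 0`, `a(v)a*(w) = ⟨v,w⟩·1`.  Then `ψ` is moment-preserving:
`φ(x₁⋯x_p) = ⟨Ω, ψ(x₁)⋯ψ(x_p)Ω⟩`. -/
theorem stmt14 {A V F : Type*} [Ring A] [StarRing A] [Algebra ℂ A]
    [Module ℝ A] [IsScalarTower ℝ ℂ A]
    [NormedAddCommGroup V] [InnerProductSpace ℝ V] [FiniteDimensional ℝ V]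
    [NormedAddCommGroup F] [InnerProductSpace ℂ F] [CompleteSpace F]
    (φ : A →ₗ[ℂ] ℂ) (hφ1 : φ 1 = 1)
    (ι : V →ₗ[ℝ] A) (hsa : ∀ v, star (ι v) = ι v)
    (hcent : ∀ v, φ (ι v) = 0)
    (hip : ∀ v w : V, φ (ι v * ι w) = ((inner ℝ v w : ℝ) : ℂ))
    (k : ∀ m : ℕ, (Fin m → A) → ℂ) (hk : MomentCumulant φ k)
    (hsemi : ∀ p : ℕ, p ≠ 1 → ∀ v : Fin (p + 1) → V,
      k (p + 1) (fun i => ι (v i)) = 0)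
    (Ω : F) (hΩ : ‖Ω‖ = 1)
    (ann : V → F →L[ℂ] F)
    (hvac : ∀ v, ann v Ω = 0)
    (hrel : ∀ v w : V, (ann v).comp (ContinuousLinearMap.adjoint (ann w))
        = ((inner ℝ v w : ℝ) : ℂ) • (1 : F →L[ℂ] F))
    (ψ : V → F →L[ℂ] F)
    (hψ : ∀ v, ψ v = ann v + ContinuousLinearMap.adjoint (ann v)) :
    ∀ (p : ℕ) (v : Fin p → V),
      φ (List.ofFn fun i => ι (v i)).prod
        = (inner ℂ Ω (((List.ofFn fun i => ψ (v i)).prod) Ω) : ℂ) := by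

  intro p v
  have hmap : (List.ofFn fun i => ψ (v i)) = (List.ofFn v).map ψ := (List.map_ofFn (f := v) (g := ψ)).symm
  have hR : (inner ℂ Ω (((List.ofFn fun i => ψ (v i)).prod) Ω) : ℂ) = fB ψ Ω (List.ofFn v) := by
    rw [hmap]; rfl
  rw [hR]
  rcases Nat.eq_zero_or_pos p with hp | hp
  · subst hp
    rw [show (List.ofFn v) = ([] : List V) from List.ofFn_zero, fB_nil ψ Ω hΩ,
      show (List.ofFn fun i => ι (v i)) = ([] : List A) from List.ofFn_zero,
      List.prod_nil, hφ1]
  · rw [phi_side φ ι k hk hip hsemi p hp v,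
      fB_eq_G ψ ann Ω hΩ hvac hrel hψ (List.ofFn v).length (List.ofFn v) rfl]
    have hlen : p = (List.ofFn v).length := (List.length_ofFn (f := v)).symm
    rw [G_cast hlen]
    refine G_congr fun i j => ?_
    have h1 : ((List.ofFn v).getD i.1 0) = v (Fin.cast hlen.symm i) := by
      rw [getD_ofFn v 0 i.1 (by have := i.2; omega)]
      exact congrArg v (Fin.ext rfl)
    have h2 : ((List.ofFn v).getD j.1 0) = v (Fin.cast hlen.symm j) := by
      rw [getD_ofFn v 0 j.1 (by have := j.2; omega)]
      exact congrArg v (Fin.ext rfl)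
    rw [h1, h2]
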